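/- There are no integers d1 ≥ d2 ≥ d3 ≥ d4 ≥ 0 and b1 ≤ b2 satisfying simultaneously 2d3 + b1 < 0, 2d2 + b1 ≥ 0, b1 = -(d1 + d4), b2 = 0, d3 > d4 > 0, d1 + d4 = d2 + d3, and 4(d1 + d2 + d3 + d4) + 5(b1 + b2) = 5. -/
import Mathlib


theorem stmt15 :
    ¬ ∃ (d1 d2 d3 d4 b1 b2 : ℤ),
      d1 ≥ d2 ∧ d2 ≥ d3 ∧ d3 ≥ d4 ∧ d4 ≥ 0 ∧ b1 ≤ b2 ∧
      2 * d3 + b1 < 0 ∧ 2 * d2 + b1 ≥ 0 ∧ b1 = -(d1 + d4) ∧ b2 = 0 ∧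
      d3 > d4 ∧ d4 > 0 ∧ d1 + d4 = d2 + d3 ∧
      4 * (d1 + d2 + d3 + d4) + 5 * (b1 + b2) = 5 := by
  rintro ⟨d1,d2,d3,d4,b1,b2,h⟩; omega
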